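/- In the setting of the extended BRST complex, at total ghost number zero the cohomology decomposes as H⁰(Ω_ext) ≅ [ker(Ω|_{S⁰}) ⊗ (S̃ᵐ/Ω̃(S̃^{m-1}))] ⊕ [(Sᵐ/Ω(S^{m-1})) ⊗ ker(Ω̃|_{S̃⁰})], provided the differentials are compatible with the ghost-degree decomposition, Ω vanishes on Sᵐ, and Ω̃ vanishes on S̃ᵐ. -/

import Mathlib

open Complex Finset
open scoped TensorProduct

noncomputable section

variable {m : ℕ} {H : Type*} [NormedAddCommGroup H] [InnerProductSpace ℂ H]

/-- BRST states: `H`-valued coefficients indexed by increasing multi-indices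
(subsets of `{1,…,m}`), i.e. `S = H ⊗ Λ[η¹,…,ηᵐ]`. -/
abbrev States (m : ℕ) (H : Type*) := Finset (Fin m) → H

/-- Sign `(-1)^{#inversions}` arising when multiplying sorted monomials `η^s · η^t`. -/
def gSign {m : ℕ} (s t : Finset (Fin m)) : ℂ :=
  (-1) ^ (((s ×ˢ t).filter (fun p => p.2 < p.1)).card)

/-- Multiplication in the exterior (Grassmann) algebra `Λ[η¹,…,ηᵐ]`,
modeled on coefficient functions. -/
def grassMul {m : ℕ} (x y : States m ℂ) : States m ℂ :=
  fun u => ∑ s ∈ u.powerset, gSign s (u \ s) * x s * y (u \ s)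

/-- The monomial `η^A` for an increasing multi-index `A`. -/
def etaMono {m : ℕ} (A : Finset (Fin m)) : States m ℂ := fun u => if u = A then 1 else 0

/-- Conjugation on `Λ[η¹,…,ηᵐ]`: fixes each generator, reverses products
(hence the sign `(-1)^{r(r-1)/2}` on a degree-`r` monomial), conjugates scalars. -/
def grassStar {m : ℕ} (x : States m ℂ) : States m ℂ :=
  fun u => ((-1 : ℂ) ^ (u.card.choose 2)) * (starRingEnd ℂ) (x u)

/-- `top`: the coefficient of `η¹η²⋯ηᵐ`. -/
def grassTop {m : ℕ} (x : States m ℂ) : ℂ := x Finset.univ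

/-- The (degenerate) scalar product `(ψ,φ) = top { Σ_{I,J} ⟨ψ_I,φ_J⟩ (η^I)* η^J }`. -/
def scalarProd (ψ φ : States m H) : ℂ :=
  ∑ I : Finset (Fin m), ∑ J : Finset (Fin m),
    (inner ℂ (ψ I) (φ J) : ℂ) * grassTop (grassMul (grassStar (etaMono I)) (etaMono J))

/-- Ghost multiplication operator `η̂ᵃ` (left exterior multiplication by `ηᵃ`). -/
def etaOp (a : Fin m) (ψ : States m H) : States m H :=
  fun u => if a ∈ u then ((-1 : ℂ) ^ ((u.filter (fun b => b < a)).card)) • ψ (u.erase a) else 0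

/-- The left odd derivation `∂/∂ηᵃ` with `∂ηᵇ/∂ηᵃ = δᵇ_a`. -/
def derOp (a : Fin m) (ψ : States m H) : States m H :=
  fun u => if a ∈ u then 0 else ((-1 : ℂ) ^ ((u.filter (fun b => b < a)).card)) • ψ (insert a u)

/-- Ghost momentum operator `P̂_a = (1/i) ∂/∂ηᵃ`. -/
def POp (a : Fin m) (ψ : States m H) : States m H := Complex.I⁻¹ • derOp a ψ

/-- `ψ` is homogeneous of ghost degree `p`. -/
def homog (ψ : States m H) (p : ℕ) : Prop := ∀ u : Finset (Fin m), u.card ≠ p → ψ u = 0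

/-- `B` is a (two-sided) adjoint of `A` with respect to the scalar product. -/
def IsAdjointPair (A B : States m H → States m H) : Prop :=
  (∀ ψ φ : States m H, scalarProd (A ψ) φ = scalarProd ψ (B φ)) ∧
  (∀ ψ φ : States m H, scalarProd (B ψ) φ = scalarProd ψ (A φ))

/-!
Ω_ext preserves the splitting `(S⁰ ⊗ S̃ᵐ) ⊕ (Sᵐ ⊗ S̃⁰)`, so the cohomology splits into the
cohomologies of the two summands. On `S⁰ ⊗ S̃ᵐ` the complex is
`S⁰ ⊗ S̃^{m-1} → S⁰ ⊗ S̃ᵐ → S¹ ⊗ S̃ᵐ`, a tensor product of vector spaces: flatness identifies the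
cocycles with `ker Ω ⊗ S̃ᵐ`, and a retraction of `ker Ω ↪ S⁰` identifies the coboundaries among
them with `ker Ω ⊗ Ω̃(S̃^{m-1})`, leaving `ker Ω ⊗ S̃ᵐ/Ω̃(S̃^{m-1})`. The other summand is the
same computation with the factors swapped.
-/

open LinearMap

abbrev MiddleHomology {R M₀ M M₂ : Type*} [Ring R] [AddCommGroup M₀] [Module R M₀]
    [AddCommGroup M] [Module R M] [AddCommGroup M₂] [Module R M₂]
    (E : M₀ →ₗ[R] M) (D : M →ₗ[R] M₂) : Type _ :=
  ker D ⧸ (range E).comap (ker D).subtype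

namespace MiddleHomology

section Ring

variable {R M₀ M M₂ N₀ N N₂ Q : Type*} [Ring R]
  [AddCommGroup M₀] [Module R M₀] [AddCommGroup M] [Module R M] [AddCommGroup M₂] [Module R M₂]
  [AddCommGroup N₀] [Module R N₀] [AddCommGroup N] [Module R N] [AddCommGroup N₂] [Module R N₂]
  [AddCommGroup Q] [Module R Q]

def equivOfSurjective {E : M₀ →ₗ[R] M} {D : M →ₗ[R] M₂} (φ : ker D →ₗ[R] Q)
    (hφ : Function.Surjective φ) (hker : ∀ z, φ z = 0 ↔ (z : M) ∈ range E) :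
    MiddleHomology E D ≃ₗ[R] Q :=
  Submodule.quotEquivOfEq _ _ (by ext z; simp [hker]) ≪≫ₗ φ.quotKerEquivOfSurjective hφ

def congr {E : M₀ →ₗ[R] M} {D : M →ₗ[R] M₂} {E' : N₀ →ₗ[R] N} {D' : N →ₗ[R] N₂}
    (e : M ≃ₗ[R] N) (hD : ∀ z, D' (e z) = 0 ↔ D z = 0)
    (hE : ∀ z, e z ∈ range E' ↔ z ∈ range E) :
    MiddleHomology E D ≃ₗ[R] MiddleHomology E' D' :=
  equivOfSurjective (((range E').comap (ker D').subtype).mkQ ∘ₗ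
      e.toLinearMap.restrict fun z hz => (hD z).2 hz)
    (by
      rintro ⟨⟨w, hw⟩⟩
      exact ⟨⟨e.symm w, (hD _).1 (by simpa using hw)⟩,
        congrArg Submodule.Quotient.mk (Subtype.ext (e.apply_symm_apply w))⟩)
    (fun z => (Submodule.Quotient.mk_eq_zero _).trans (hE z))

def prodEquiv (E₁ : M₀ →ₗ[R] M) (D₁ : M →ₗ[R] M₂) (E₂ : N₀ →ₗ[R] N) (D₂ : N →ₗ[R] N₂) :
    MiddleHomology (E₁.prodMap E₂) (D₁.prodMap D₂) ≃ₗ[R]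
      MiddleHomology E₁ D₁ × MiddleHomology E₂ D₂ :=
  equivOfSurjective
    ((((range E₁).comap (ker D₁).subtype).mkQ ∘ₗ
        (fst R M N).restrict fun z hz => (by simpa using hz : _ ∧ _).1).prod
      (((range E₂).comap (ker D₂).subtype).mkQ ∘ₗ
        (snd R M N).restrict fun z hz => (by simpa using hz : _ ∧ _).2))
    (by
      rintro ⟨⟨⟨x, hx⟩⟩, ⟨⟨y, hy⟩⟩⟩
      exact ⟨⟨(x, y), by simp_all⟩, rfl⟩)
    (fun z => by simp [Submodule.Quotient.mk_eq_zero, Prod.ext_iff])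

end Ring

section Field

variable {K A B C₁ C : Type*} [Field K]
  [AddCommGroup A] [Module K A] [AddCommGroup B] [Module K B]
  [AddCommGroup C₁] [Module K C₁] [AddCommGroup C] [Module K C]

def rTensorEquiv (f : A →ₗ[K] B) (g : C₁ →ₗ[K] C) :
    MiddleHomology (g.lTensor A) (f.rTensor C) ≃ₗ[K] ker f ⊗[K] (C ⧸ range g) := by
  let ι := (ker f).subtype
  let q := (range g).mkQ
  have hsplit := ι.exists_leftInverse_of_injective (ker f).ker_subtype
  let r := hsplit.choose
  have hr : r ∘ₗ ι = LinearMap.id := hsplit.choose_spec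
  have hcycles : Function.Exact (ι.rTensor C) (f.rTensor C) :=
    Module.Flat.rTensor_exact C (exact_subtype_ker_map f)
  have hretract (w : ker f ⊗[K] C) : TensorProduct.map r q (ι.rTensor C w) = q.lTensor _ w := by
    rw [map_rTensor, hr]
    rfl
  refine equivOfSurjective (TensorProduct.map r q ∘ₗ (ker (f.rTensor C)).subtype) ?_ ?_
  · intro y
    obtain ⟨w, rfl⟩ := lTensor_surjective (ker f) (range g).mkQ_surjective y
    exact ⟨⟨ι.rTensor C w, hcycles.apply_apply_eq_zero w⟩, hretract w⟩
  · intro z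
    constructor
    · intro hz
      obtain ⟨w, hw⟩ := (hcycles z).1 z.2
      have hqw : q.lTensor _ w = 0 := by rwa [← hretract, hw]
      obtain ⟨v, rfl⟩ :=
        (lTensor_exact (ker f) (exact_map_mkQ_range g) (range g).mkQ_surjective w).1 hqw
      refine ⟨ι.rTensor C₁ v, ?_⟩
      rw [← hw, ← comp_apply, ← comp_apply, lTensor_comp_rTensor, rTensor_comp_lTensor]
    · rintro ⟨v, hv⟩
      change TensorProduct.map r q z = 0
      rw [← hv, map_lTensor, range_mkQ_comp, TensorProduct.map_zero_right, LinearMap.zero_apply]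

def lTensorEquiv (f : A →ₗ[K] B) (g : C₁ →ₗ[K] C) :
    MiddleHomology (g.rTensor A) (f.lTensor C) ≃ₗ[K] (C ⧸ range g) ⊗[K] ker f :=
  congr (TensorProduct.comm K C A)
      (fun z => by simp [rTensor_comm])
      (fun z => by
        rw [← comm_comp_rTensor_comp_comm_eq, range_comp, LinearEquiv.range_comp,
          Submodule.mem_map_equiv]
        simp) ≪≫ₗ
    rTensorEquiv f g ≪≫ₗ TensorProduct.comm K _ _

end Field

end MiddleHomology

/-- at total ghost number zero (component `(S⁰ ⊗ S̃ᵐ) ⊕ (Sᵐ ⊗ S̃⁰)`,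
with `Ω` vanishing on `Sᵐ` and `Ω̃` on `S̃ᵐ`, so the outgoing differential is
`D = (Ω ⊗ 1) ⊕ (1 ⊗ Ω̃)` and the incoming one is `E = (1 ⊗ Ω̃) ⊕ (Ω ⊗ 1)`),
the BRST cohomology decomposes as
`H⁰(Ω_ext) ≅ [ker(Ω|_{S⁰}) ⊗ (S̃ᵐ/Ω̃(S̃^{m-1}))] ⊕ [(Sᵐ/Ω(S^{m-1})) ⊗ ker(Ω̃|_{S̃⁰})]`. -/
theorem ghost_zero_cohomology_decomposition
    (S0 S1 Sm1 Sm T0 T1 Tm1 Tm : Type*)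
    [AddCommGroup S0] [Module ℂ S0] [AddCommGroup S1] [Module ℂ S1]
    [AddCommGroup Sm1] [Module ℂ Sm1] [AddCommGroup Sm] [Module ℂ Sm]
    [AddCommGroup T0] [Module ℂ T0] [AddCommGroup T1] [Module ℂ T1]
    [AddCommGroup Tm1] [Module ℂ Tm1] [AddCommGroup Tm] [Module ℂ Tm]
    (Ω0 : S0 →ₗ[ℂ] S1) (Ωm1 : Sm1 →ₗ[ℂ] Sm)
    (Ω'0 : T0 →ₗ[ℂ] T1) (Ω'm1 : Tm1 →ₗ[ℂ] Tm)
    (D : (S0 ⊗[ℂ] Tm) × (Sm ⊗[ℂ] T0) →ₗ[ℂ] (S1 ⊗[ℂ] Tm) × (Sm ⊗[ℂ] T1))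
    (hD : D = (LinearMap.rTensor Tm Ω0).prodMap (LinearMap.lTensor Sm Ω'0))
    (E : (S0 ⊗[ℂ] Tm1) × (Sm1 ⊗[ℂ] T0) →ₗ[ℂ] (S0 ⊗[ℂ] Tm) × (Sm ⊗[ℂ] T0))
    (hE : E = (LinearMap.lTensor S0 Ω'm1).prodMap (LinearMap.rTensor T0 Ωm1)) :
    Nonempty
      ((↥(LinearMap.ker D) ⧸
          (LinearMap.range E).comap (LinearMap.ker D).subtype) ≃ₗ[ℂ]
        ((↥(LinearMap.ker Ω0) ⊗[ℂ] (Tm ⧸ LinearMap.range Ω'm1)) ×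
          ((Sm ⧸ LinearMap.range Ωm1) ⊗[ℂ] ↥(LinearMap.ker Ω'0)))) := by
  subst hD hE
  exact ⟨MiddleHomology.prodEquiv _ _ _ _ ≪≫ₗ
    (MiddleHomology.rTensorEquiv Ω0 Ω'm1).prodCongr (MiddleHomology.lTensorEquiv Ω'0 Ωm1)⟩
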